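/- arXiv:2004.07630 — 4 statements merged into one kernel-verified Lean document; each statement's English description precedes it below -/
import Mathlib

section
/- For every r ≥ 1 and every vertex ordering ≺ of a graph with at least r^3 designated pairs of vertices (each pair consisting of two distinct vertices, and all pairs pairwise disjoint), one can identify r of these pairs that form either an r-rainbow, an r-twist, or an r-necklace in ≺. -/
/-!
Call pair `i` nested around pair `j` when `s i < s j` and `t j < t i`; this is a strict order.
By Mirsky's theorem, `r³` pairs contain either a nesting chain of length `r`, which is a
rainbow, or `r²` pairwise non-nested pairs, which `s` and `t` order in the same way. Among
those, "`i` lies entirely before `j`" (`t i < s j`) is again a strict order, so Mirsky gives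
either a chain of length `r`, which is a necklace, or `r` pairwise overlapping pairs, in which
every `s` precedes every `t`: a twist.
-/

open Finset

theorem exists_strictMono_or_antichain {α : Type*} [PartialOrder α] [Fintype α] {k m : ℕ}
    (h : k * m < Fintype.card α) :
    (∃ f : Fin (k + 1) → α, StrictMono f) ∨
      ∃ u : Finset α, IsAntichain (· ≤ ·) (u : Set α) ∧ m < #u := by
  by_cases hk : ∃ a : α, (k : ℕ∞) ≤ Order.height a
  · obtain ⟨a, ha⟩ := hk
    obtain ⟨p, -, hp⟩ := Order.exists_series_of_le_height a ha
    exact Or.inl ⟨p ∘ Fin.cast (by rw [hp]), p.strictMono.comp (Fin.cast_strictMono _)⟩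
  push Not at hk
  have hfin (a : α) : Order.height a = (Order.height a).toNat :=
    (ENat.natCast_toNat (hk a).ne_top).symm
  have hmaps : ∀ a ∈ (univ : Finset α), (Order.height a).toNat ∈ range k := fun a _ =>
    mem_range.2 (by exact_mod_cast hfin a ▸ hk a)
  obtain ⟨j, -, hj⟩ :=
    exists_lt_card_fiber_of_mul_lt_card_of_maps_to hmaps (by simpa using h)
  refine Or.inr ⟨_, fun a ha b hb hne hab => ?_, hj⟩
  simp only [coe_filter, mem_univ, true_and, Set.mem_ofPred_eq] at ha hb
  refine (Order.height_strictMono (lt_of_le_of_ne hab hne) (hk a |>.trans_le le_top)).ne ?_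
  rw [hfin a, hfin b, ha, hb]

theorem exists_chain_or_antichain {α : Type*} (r : α → α → Prop) [IsStrictOrder α r]
    (s : Finset α) {k m : ℕ} (h : k * m < #s) :
    (∃ f : Fin (k + 1) → α, (∀ i, f i ∈ s) ∧ ∀ i j, i < j → r (f i) (f j)) ∨
      ∃ u ⊆ s, IsAntichain r (u : Set α) ∧ m < #u := by
  let : PartialOrder s := partialOrderOfSO (Subtype.val ⁻¹'o r)
  rcases exists_strictMono_or_antichain (α := s) (by simpa using h) with ⟨f, hf⟩ | ⟨u, hu, hm⟩
  · exact Or.inl ⟨fun i => f i, fun i => (f i).2, fun i j hij => hf hij⟩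
  · refine Or.inr ⟨u.map (Function.Embedding.subtype _), fun a ha => ?_, ?_, by simpa using hm⟩
    · obtain ⟨a, -, rfl⟩ := mem_map.1 ha
      exact a.2
    · simp only [coe_map, Function.Embedding.subtype_apply]
      rintro _ ⟨a, ha, rfl⟩ _ ⟨b, hb, rfl⟩ hne hab
      exact hu ha hb (fun h => hne (congrArg _ h)) (Or.inr hab)

theorem Function.injective_of_forall_lt_rel {ι α : Type*} [LinearOrder ι] {r : α → α → Prop}
    [Std.Irrefl r] {f : ι → α} (hf : ∀ i j, i < j → r (f i) (f j)) : Function.Injective f := by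
  intro i j hij
  by_contra hne
  rcases lt_or_gt_of_ne hne with h | h
  · exact irrefl _ (hij ▸ hf i j h)
  · exact irrefl _ (hij ▸ hf j i h)

theorem exists_strictMono_comp_of_injOn {α β : Type*} [LinearOrder β] {f : α → β} {u : Finset α}
    (hf : Set.InjOn f u) {r : ℕ} (hr : r ≤ #u) :
    ∃ σ : Fin r → α, (∀ i, σ i ∈ u) ∧ StrictMono (f ∘ σ) := by
  have hcard : #(u.image f) = #u := card_image_of_injOn hf
  let e := (u.image f).orderEmbOfFin hcard
  have he : ∀ i : Fin r, ∃ a ∈ u, f a = e (Fin.castLE hr i) := fun i =>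
    mem_image.1 ((u.image f).orderEmbOfFin_mem hcard _)
  choose σ hσu hσ using he
  refine ⟨σ, hσu, fun i j hij => ?_⟩
  simp only [Function.comp_apply, hσ]
  exact e.strictMono (Fin.strictMono_castLE hr hij)

theorem isStrictOrder_nests {ι V : Type*} [Preorder V] (s t : ι → V) :
    IsStrictOrder ι fun i j => s i < s j ∧ t j < t i where
  irrefl _ h := lt_irrefl _ h.1
  trans _ _ _ hij hjk := ⟨hij.1.trans hjk.1, hjk.2.trans hij.2⟩

theorem isStrictOrder_precedes {ι V : Type*} [Preorder V] {s t : ι → V} (hst : ∀ i, s i < t i) :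
    IsStrictOrder ι fun i j => t i < s j where
  irrefl i h := lt_asymm h (hst i)
  trans _ j _ hij hjk := hij.trans ((hst j).trans hjk)

/-- For every `r ≥ 1` and every vertex ordering of a graph with at least `r ^ 3`
designated pairwise disjoint pairs of vertices `⟨s i, t i⟩` (with `s i ≺ t i`),
one can identify `r` pairs forming an `r`-rainbow
(`s_1 ≺ ⋯ ≺ s_r ≺ t_r ≺ ⋯ ≺ t_1`), an `r`-twist
(`s_1 ≺ ⋯ ≺ s_r ≺ t_1 ≺ ⋯ ≺ t_r`), or an `r`-necklace
(`s_1 ≺ t_1 ≺ ⋯ ≺ s_r ≺ t_r`). -/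
theorem stmt_4 {V : Type*} [LinearOrder V] (r n : ℕ) (hr : 1 ≤ r)
    (hn : r ^ 3 ≤ n) (s t : Fin n → V) (hst : ∀ i, s i < t i)
    (hdisj : ∀ i j : Fin n, i ≠ j →
      s i ≠ s j ∧ s i ≠ t j ∧ t i ≠ s j ∧ t i ≠ t j) :
    ∃ σ : Fin r → Fin n, Function.Injective σ ∧
      ((StrictMono (fun i => s (σ i)) ∧ StrictAnti (fun i => t (σ i))) ∨
       (StrictMono (fun i => s (σ i)) ∧ StrictMono (fun i => t (σ i)) ∧
         ∀ i j : Fin r, s (σ i) < t (σ j)) ∨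
       (∀ i j : Fin r, i < j → t (σ i) < s (σ j))) := by
  obtain ⟨k, rfl⟩ := Nat.exists_eq_add_of_le' hr
  have := isStrictOrder_nests s t
  rcases exists_chain_or_antichain (fun i j => s i < s j ∧ t j < t i) univ (k := k) (m := k * k)
      (by rw [card_univ, Fintype.card_fin]; nlinarith) with
    ⟨σ, -, hσ⟩ | ⟨T, -, hT, hTcard⟩
  · have hsσ : StrictMono (s ∘ σ) := fun i j h => (hσ i j h).1
    exact ⟨σ, hsσ.injective.of_comp, Or.inl ⟨hsσ, fun i j h => (hσ i j h).2⟩⟩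
  have := isStrictOrder_precedes hst
  rcases exists_chain_or_antichain (fun i j => t i < s j) T (k := k) (m := k) hTcard with
    ⟨σ, -, hσ⟩ | ⟨U, hUT, hU, hUcard⟩
  · exact ⟨σ, Function.injective_of_forall_lt_rel (r := fun i j => t i < s j) hσ,
      Or.inr (Or.inr hσ)⟩
  have hs_inj : Function.Injective s := fun i j hij => by_contra fun h => (hdisj i j h).1 hij
  obtain ⟨σ, hσU, hσ⟩ := exists_strictMono_comp_of_injOn hs_inj.injOn hUcard
  refine ⟨σ, hσ.injective.of_comp, Or.inr (Or.inl ⟨hσ, fun i j hij => ?_, fun i j => ?_⟩)⟩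
  · have hne : σ i ≠ σ j := (hσ hij).ne ∘ congrArg s
    refine lt_of_le_of_ne (not_lt.1 fun h => ?_) (hdisj _ _ hne).2.2.2
    exact hT (hUT (hσU i)) (hUT (hσU j)) hne ⟨hσ hij, h⟩
  · by_cases hij : σ i = σ j
    · exact hij ▸ hst (σ i)
    exact lt_of_le_of_ne (not_lt.1 (hU (hσU j) (hσU i) (Ne.symm hij))) (hdisj _ _ hij).2.1
end

section
/- If r^2 + 1 pairwise disjoint pairs of vertices in a linear order have the property that every two of them form either a 2-twist or a 2-necklace (i.e., no two of them are nested), then r of them form an r-twist or r of them form an r-necklace. -/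
/-!
Sort the pairs by their left ends. The relation `t i < s j` ("pair `i` lies entirely before pair
`j`") is a strict partial order; its chains are necklaces, and since no two pairs are nested, its
antichains are twists. By Mirsky's argument (elements of equal height form an antichain), a poset
with more than `r * r` elements has a chain or an antichain of more than `r` elements.
-/

open Finset Order

theorem exists_strictMono_or_isAntichain_of_mul_lt_card {α : Type*} [PartialOrder α] [Fintype α]
    {m n : ℕ} (h : m * n < Fintype.card α) :
    (∃ f : Fin (m + 1) → α, StrictMono f) ∨
      ∃ A : Finset α, IsAntichain (· ≤ ·) (A : Set α) ∧ n < #A := by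
  by_cases hm : ∃ a : α, (m : ℕ∞) ≤ height a
  · obtain ⟨a, ha⟩ := hm
    obtain ⟨p, -, rfl⟩ := exists_series_of_le_height a ha
    exact .inl ⟨p, p.strictMono⟩
  push Not at hm
  have hfin (a : α) : ((height a).toNat : ℕ∞) = height a := ENat.natCast_toNat (hm a).ne_top
  have hmaps : ∀ a ∈ (univ : Finset α), (height a).toNat ∈ range m := fun a _ => by
    rw [mem_range, ← Nat.cast_lt (α := ℕ∞), hfin]
    exact hm a
  obtain ⟨k, -, hk⟩ := exists_lt_card_fiber_of_mul_lt_card_of_maps_to hmaps (by simpa using h)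
  refine .inr ⟨_, fun a ha b hb hab hle => ?_, hk⟩
  simp only [coe_filter, mem_univ, true_and, Set.mem_ofPred_eq] at ha hb
  have hlt := height_add_one_le (lt_of_le_of_ne hle hab)
  rw [← hfin a, ← hfin b, ha, hb] at hlt
  exact absurd hlt (by norm_cast; omega)

theorem exists_chain_or_antichain_of_isStrictOrder {α : Type*} [Fintype α] (R : α → α → Prop)
    [IsStrictOrder α R] {m n : ℕ} (h : m * n < Fintype.card α) :
    (∃ f : Fin (m + 1) → α, ∀ i j, i < j → R (f i) (f j)) ∨
      ∃ A : Finset α, (A : Set α).Pairwise (fun a b => ¬R a b) ∧ n < #A := by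
  let _ := partialOrderOfSO R
  refine (exists_strictMono_or_isAntichain_of_mul_lt_card h).imp
    (fun ⟨f, hf⟩ => ⟨f, fun _ _ hij => hf hij⟩) (fun ⟨A, hA, hcard⟩ => ⟨A, ?_, hcard⟩)
  exact fun a ha b hb hab hR => hA ha hb hab (.inr hR)

section Pairs

variable {ι V : Type*} [LinearOrder V] (s t : ι → V)

def IsTwist {r : ℕ} (σ : Fin r → ι) : Prop :=
  StrictMono (s ∘ σ) ∧ StrictMono (t ∘ σ) ∧ ∀ i j, s (σ i) < t (σ j)

def IsNecklace {r : ℕ} (σ : Fin r → ι) : Prop :=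
  ∀ i j, i < j → t (σ i) < s (σ j)

variable {s t} [LinearOrder ι]

lemma isTwist_of_crossing (hs : StrictMono s) (ht : Function.Injective t)
    (hst : ∀ i, s i < t i) (hnonnested : ∀ i j, i ≠ j → ¬(s i < s j ∧ t j < t i))
    {r : ℕ} {σ : Fin r → ι} (hσ : StrictMono σ) (hcross : ∀ i j, i < j → s (σ j) < t (σ i)) :
    IsTwist s t σ := by
  have hsσ : StrictMono (s ∘ σ) := hs.comp hσ
  refine ⟨hsσ, fun i j hij => ?_, fun i j => ?_⟩
  · have hne : σ i ≠ σ j := (hσ hij).ne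
    exact lt_of_le_of_ne (not_lt.1 fun h => hnonnested _ _ hne ⟨hsσ hij, h⟩) (ht.ne hne)
  · rcases lt_trichotomy i j with hij | rfl | hij
    · exact (hsσ hij).trans (hst _)
    · exact hst _
    · exact hcross j i hij

theorem exists_isTwist_or_isNecklace_of_strictMono [Fintype ι] {r : ℕ}
    (hcard : r * r < Fintype.card ι) (hs : StrictMono s) (ht : Function.Injective t)
    (hst : ∀ i, s i < t i) (hts : ∀ i j, t i ≠ s j)
    (hnonnested : ∀ i j, i ≠ j → ¬(s i < s j ∧ t j < t i)) :
    ∃ σ : Fin r → ι, StrictMono σ ∧ (IsTwist s t σ ∨ IsNecklace s t σ) := by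
  have hlt_of_sep {i j : ι} (h : t i < s j) : i < j := hs.lt_iff_lt.1 ((hst i).trans h)
  have : IsStrictOrder ι (fun i j => t i < s j) :=
    { irrefl := fun i h => (hst i).asymm h
      trans := fun i j k hij hjk => hij.trans ((hst j).trans hjk) }
  rcases exists_chain_or_antichain_of_isStrictOrder (fun i j => t i < s j) hcard with
    ⟨f, hf⟩ | ⟨A, hA, hcard⟩
  · refine ⟨f ∘ Fin.castSucc, fun i j hij => hlt_of_sep (hf _ _ ?_), .inr fun i j hij => hf _ _ ?_⟩
    all_goals exact Fin.castSucc_lt_castSucc_iff.2 hij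
  · obtain ⟨B, hBA, hB⟩ := exists_subset_card_eq hcard.le
    refine ⟨B.orderEmbOfFin hB, (B.orderEmbOfFin hB).strictMono,
      .inl (isTwist_of_crossing hs ht hst hnonnested (B.orderEmbOfFin hB).strictMono ?_)⟩
    intro i j hij
    have hne := ((B.orderEmbOfFin hB).strictMono hij).ne
    refine lt_of_le_of_ne (not_lt.1 (hA (hBA ?_) (hBA ?_) hne)) (hts _ _).symm
    all_goals exact B.orderEmbOfFin_mem hB _

end Pairs

/-- If `r ^ 2 + 1` pairwise disjoint pairs of vertices `⟨s i, t i⟩` (with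
`s i ≺ t i`) in a linear order are such that no two of them are nested (so
every two form a 2-twist or a 2-necklace), then `r` of them form an `r`-twist
(`s_1 ≺ ⋯ ≺ s_r ≺ t_1 ≺ ⋯ ≺ t_r`) or `r` of them form an `r`-necklace
(`s_1 ≺ t_1 ≺ ⋯ ≺ s_r ≺ t_r`). -/
theorem stmt_5 {V : Type*} [LinearOrder V] (r : ℕ)
    (s t : Fin (r ^ 2 + 1) → V) (hst : ∀ i, s i < t i)
    (hdisj : ∀ i j, i ≠ j → s i ≠ s j ∧ s i ≠ t j ∧ t i ≠ s j ∧ t i ≠ t j)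
    (hnonnested : ∀ i j, i ≠ j → ¬(s i < s j ∧ t j < t i)) :
    ∃ σ : Fin r → Fin (r ^ 2 + 1), Function.Injective σ ∧
      ((StrictMono (fun i => s (σ i)) ∧ StrictMono (fun i => t (σ i)) ∧
         ∀ i j : Fin r, s (σ i) < t (σ j)) ∨
       (∀ i j : Fin r, i < j → t (σ i) < s (σ j))) := by
  have hs : Function.Injective s := fun i j h => by_contra fun hij => (hdisj i j hij).1 h
  have ht : Function.Injective t := fun i j h => by_contra fun hij => (hdisj i j hij).2.2.2 h
  have hts (i j) : t i ≠ s j := by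
    rcases eq_or_ne i j with rfl | hij
    exacts [(hst i).ne', (hdisj i j hij).2.2.1]
  set e := Tuple.sort s
  have hse : StrictMono (s ∘ e) :=
    (Tuple.monotone_sort s).strictMono_of_injective (hs.comp e.injective)
  obtain ⟨σ, hσ, h⟩ := exists_isTwist_or_isNecklace_of_strictMono (r := r) (s := s ∘ e) (t := t ∘ e)
    (by simp [sq]) hse (ht.comp e.injective) (fun i => hst (e i)) (fun i j => hts (e i) (e j))
    (fun i j hij => hnonnested (e i) (e j) (e.injective.ne hij))
  exact ⟨e ∘ σ, e.injective.comp hσ.injective, h⟩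
end

section
/- The book thickness of the complete graph K_n on n vertices equals ⌈n/2⌉ for n ≥ 4. -/
/-- `pg` is a valid page assignment for the graph `G` with respect to the spine
order given by `f`: no two edges on the same page cross. -/
def ValidAssign {V : Type*} (f : V → ℕ) (G : SimpleGraph V) {k : ℕ}
    (pg : Sym2 V → Fin k) : Prop :=
  ∀ a b c d : V, G.Adj a b → G.Adj c d → f a < f b → f c < f d →
    pg s(a, b) = pg s(c, d) →
    ¬((f a < f c ∧ f c < f b ∧ f b < f d) ∨ (f c < f a ∧ f a < f d ∧ f d < f b))

/-- `G` admits a `k`-page book embedding: a linear order of the vertices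
(an injection into `ℕ`) together with an assignment of edges to `k` pages so
that no two edges on the same page cross. -/
def HasBookEmbedding {V : Type*} (G : SimpleGraph V) (k : ℕ) : Prop :=
  ∃ f : V → ℕ, Function.Injective f ∧ ∃ pg : Sym2 V → Fin k, ValidAssign f G pg

/-- The book thickness of `G`: the minimum number of pages over all book
embeddings of `G`. -/
noncomputable def bookThickness {V : Type*} (G : SimpleGraph V) : ℕ :=
  sInf {k | HasBookEmbedding G k}

/-!
Upper bound: put the vertices on the spine in their natural order and the edge `{a, b}` on
page `⌊((a + b) mod n) / 2⌋`. The endpoint sums of two crossing edges differ by between `2` and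
`n - 2`, so modulo `n` they cannot land in the same pair `{2j, 2j + 1}`.

Lower bound: read the spine positions as the vertices of a convex `n`-gon. Its `n` sides cross
nothing, while one page holds at most `n - 3` pairwise non-crossing diagonals: a shortest
diagonal of the page has a vertex strictly inside it that no other diagonal of the page touches,
and deleting that vertex and that diagonal allows induction. Hence
`n(n - 1)/2 ≤ n + k(n - 3)`, that is `n ≤ 2k`.
-/

open Finset Function

namespace BookEmbedding

def Crosses (p q : ℕ × ℕ) : Prop := p.1 < q.1 ∧ q.1 < p.2 ∧ p.2 < q.2

def IsChord (S : Finset ℕ) (p : ℕ × ℕ) : Prop := p.1 ∈ S ∧ p.2 ∈ S ∧ p.1 < p.2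

/-- With `S` read as the vertex set of a convex polygon, listed in increasing order, the inner
chords are its diagonals: neither a side between consecutive points of `S` nor the side joining
`min S` to `max S`. -/
def IsInnerChord (S : Finset ℕ) (p : ℕ × ℕ) : Prop :=
  IsChord S p ∧ (∃ x ∈ S, p.1 < x ∧ x < p.2) ∧ ∃ x ∈ S, x < p.1 ∨ p.2 < x

lemma isInnerChord_erase {S : Finset ℕ} {F : Finset (ℕ × ℕ)}
    (hF : ∀ p ∈ F, IsInnerChord S p) (hnc : ∀ p ∈ F, ∀ q ∈ F, ¬ Crosses p q)
    {p₀ : ℕ × ℕ} (hp₀ : p₀ ∈ F) (hmin : ∀ q ∈ F, p₀.2 - p₀.1 ≤ q.2 - q.1)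
    {x : ℕ} (hx₁ : p₀.1 < x) (hx₂ : x < p₀.2) {q : ℕ × ℕ} (hq : q ∈ F) (hqp₀ : q ≠ p₀) :
    IsInnerChord (S.erase x) q := by
  obtain ⟨⟨hq₁, hq₂, hq₁₂⟩, ⟨y, hy, hy₁, hy₂⟩, z, hz, hz'⟩ := hF q hq
  obtain ⟨⟨hp₁, hp₂, -⟩, -⟩ := hF p₀ hp₀
  have hpq := hnc p₀ hp₀ q hq
  have hqp := hnc q hq p₀ hp₀
  have hlen := hmin q hq
  have hne : q.1 ≠ p₀.1 ∨ q.2 ≠ p₀.2 := not_and_or.1 (hqp₀ ∘ Prod.ext_iff.2)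
  simp only [Crosses] at hpq hqp
  refine ⟨⟨mem_erase.2 ⟨by omega, hq₁⟩, mem_erase.2 ⟨by omega, hq₂⟩, hq₁₂⟩, ?_, ?_⟩
  · by_cases hyx : y = x
    · by_cases h : q.1 < p₀.1
      · exact ⟨p₀.1, mem_erase.2 ⟨by omega, hp₁⟩, h, by omega⟩
      · exact ⟨p₀.2, mem_erase.2 ⟨by omega, hp₂⟩, by omega, by omega⟩
    · exact ⟨y, mem_erase.2 ⟨hyx, hy⟩, hy₁, hy₂⟩
  · by_cases hzx : z = x
    · by_cases h : z < q.1
      · exact ⟨p₀.1, mem_erase.2 ⟨by omega, hp₁⟩, by omega⟩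
      · exact ⟨p₀.2, mem_erase.2 ⟨by omega, hp₂⟩, by omega⟩
    · exact ⟨z, mem_erase.2 ⟨hzx, hz⟩, hz'⟩

theorem card_le_of_pairwise_not_crosses (S : Finset ℕ) (F : Finset (ℕ × ℕ))
    (hF : ∀ p ∈ F, IsInnerChord S p) (hnc : ∀ p ∈ F, ∀ q ∈ F, ¬ Crosses p q) :
    #F ≤ #S - 3 := by
  induction S using Finset.strongInduction generalizing F with
  | H S ih =>
  obtain rfl | hne := F.eq_empty_or_nonempty
  · simp
  obtain ⟨p₀, hp₀, hmin⟩ := F.exists_min_image (fun p => p.2 - p.1) hne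
  obtain ⟨⟨hp₁, hp₂, -⟩, ⟨x, hx, hx₁, hx₂⟩, w, hw, hw'⟩ := hF p₀ hp₀
  have hS : 2 < #(S.erase x) := two_lt_card_iff.2 ⟨p₀.1, p₀.2, w,
    mem_erase.2 ⟨by omega, hp₁⟩, mem_erase.2 ⟨by omega, hp₂⟩, mem_erase.2 ⟨by omega, hw⟩,
    by omega, by omega, by omega⟩
  have hF' := ih (S.erase x) (erase_ssubset hx) (F.erase p₀)
    (fun q hq => isInnerChord_erase hF hnc hp₀ hmin hx₁ hx₂ (mem_of_mem_erase hq)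
      (ne_of_mem_erase hq))
    (fun p hp q hq => hnc p (mem_of_mem_erase hp) q (mem_of_mem_erase hq))
  rw [card_erase_of_mem hx] at hS hF'
  rw [card_erase_of_mem hp₀] at hF'
  have := hne.card_pos
  omega

theorem card_le_of_not_isInnerChord (S : Finset ℕ) (F : Finset (ℕ × ℕ))
    (hF : ∀ p ∈ F, IsChord S p ∧ ¬ IsInnerChord S p) : #F ≤ #S := by
  classical
  -- with a point of `S` inside, a non-inner chord has none outside, so it is `(min S, max S)`;
  -- without one, it joins neighbours of `S` and is determined by its right end
  refine card_le_card_of_injOn (fun p => if ∃ x ∈ S, p.1 < x ∧ x < p.2 then p.1 else p.2)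
    (fun p hp => ?_) (fun p hp q hq hpq => ?_)
  · obtain ⟨⟨hp₁, hp₂, -⟩, -⟩ := hF p hp
    dsimp only
    split_ifs <;> assumption
  · obtain ⟨hpc, hpi⟩ := hF p hp
    obtain ⟨hqc, hqi⟩ := hF q hq
    obtain ⟨hp₁, hp₂, hp⟩ := hpc
    obtain ⟨hq₁, hq₂, hq⟩ := hqc
    simp only [IsInnerChord, IsChord, hp₁, hp₂, hp, hq₁, hq₂, hq, true_and, not_and, not_exists]
      at hpi hqi
    dsimp only at hpq
    split_ifs at hpq with hpb hqb hqb
    · have := hpi hpb q.2 hq₂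
      have := hqi hqb p.2 hp₂
      exact Prod.ext hpq (by omega)
    · have := hpi hpb q.1 hq₁
      omega
    · have := hqi hqb p.1 hp₁
      omega
    · push Not at hpb hqb
      have := hpb q.1 hq₁
      have := hqb p.1 hp₁
      exact Prod.ext (by omega) hpq

lemma le_two_mul_of_choose_two_le {n k : ℕ} (hn : 4 ≤ n) (h : n.choose 2 ≤ k * (n - 3) + n) :
    n ≤ 2 * k := by
  obtain ⟨m, rfl⟩ := Nat.exists_eq_add_of_le hn
  rw [Nat.choose_two_right] at h
  have hdiv := Nat.div_two_mul_two_of_even (Nat.even_mul_pred_self (4 + m))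
  rw [show 4 + m - 1 = m + 3 by omega] at h hdiv
  rw [show 4 + m - 3 = m + 1 by omega] at h
  have : (4 + m) * (m + 1) ≤ 2 * k * (m + 1) := by nlinarith
  exact Nat.le_of_mul_le_mul_right this m.succ_pos

section Chord

variable {V : Type*} {f : V → ℕ}

def chord (f : V → ℕ) (e : Sym2 V) : ℕ × ℕ := ((e.map f).inf, (e.map f).sup)

lemma chord_mk_of_lt {a b : V} (h : f a < f b) : chord f s(a, b) = (f a, f b) := by
  simp [chord, h.le]

lemma chord_injective (hf : Injective f) : Injective (chord f) := fun _ _ h =>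
  Sym2.map.injective hf (Sym2.inf_eq_inf_and_sup_eq_sup.1 (Prod.ext_iff.1 h))

lemma exists_lt_and_eq_mk (hf : Injective f) {e : Sym2 V} (he : ¬ e.IsDiag) :
    ∃ a b, f a < f b ∧ e = s(a, b) := by
  induction e with | _ a b
  have hab : f a ≠ f b := hf.ne (by simpa using he)
  rcases hab.lt_or_gt with h | h
  · exact ⟨a, b, h, rfl⟩
  · exact ⟨b, a, h, Sym2.eq_swap⟩

lemma isChord_chord (hf : Injective f) {e : Sym2 V} (he : ¬ e.IsDiag) {S : Finset ℕ}
    (hS : ∀ v, f v ∈ S) : IsChord S (chord f e) := by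
  obtain ⟨a, b, hab, rfl⟩ := exists_lt_and_eq_mk hf he
  rw [chord_mk_of_lt hab]
  exact ⟨hS a, hS b, hab⟩

lemma not_crosses_chord {G : SimpleGraph V} (hf : Injective f) {k : ℕ} {pg : Sym2 V → Fin k}
    (hpg : ValidAssign f G pg) {e e' : Sym2 V} (he : e ∈ G.edgeSet) (he' : e' ∈ G.edgeSet)
    (hpage : pg e = pg e') : ¬ Crosses (chord f e) (chord f e') := by
  obtain ⟨a, b, hab, rfl⟩ := exists_lt_and_eq_mk hf (G.not_isDiag_of_mem_edgeSet he)
  obtain ⟨c, d, hcd, rfl⟩ := exists_lt_and_eq_mk hf (G.not_isDiag_of_mem_edgeSet he')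
  rw [chord_mk_of_lt hab, chord_mk_of_lt hcd]
  exact fun h => hpg a b c d he he' hab hcd hpage (Or.inl h)

theorem choose_two_le_of_validAssign [Fintype V] (hf : Injective f) {k : ℕ}
    {pg : Sym2 V → Fin k} (hpg : ValidAssign f ⊤ pg) :
    (Fintype.card V).choose 2 ≤ k * (Fintype.card V - 3) + Fintype.card V := by
  classical
  set S := univ.image f
  have hS : #S = Fintype.card V := card_image_of_injective _ hf
  set E := (⊤ : SimpleGraph V).edgeFinset
  have hinner : #{e ∈ E | IsInnerChord S (chord f e)} ≤ (#S - 3) * k := by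
    refine (card_le_mul_card_image_of_maps_to (f := pg) (t := univ) (fun _ _ => mem_univ _)
      (#S - 3) fun π _ => ?_).trans_eq (by simp)
    rw [← card_image_of_injective _ (chord_injective hf)]
    refine card_le_of_pairwise_not_crosses S _ ?_ ?_
    · simp only [mem_image, mem_filter]
      rintro _ ⟨e, ⟨⟨_, h⟩, _⟩, rfl⟩
      exact h
    · simp only [mem_image, mem_filter]
      rintro _ ⟨e, ⟨⟨he, _⟩, hπ⟩, rfl⟩ _ ⟨e', ⟨⟨he', _⟩, hπ'⟩, rfl⟩
      exact not_crosses_chord hf hpg (SimpleGraph.mem_edgeFinset.1 he)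
        (SimpleGraph.mem_edgeFinset.1 he') (hπ.trans hπ'.symm)
  have hside : #{e ∈ E | ¬ IsInnerChord S (chord f e)} ≤ #S := by
    rw [← card_image_of_injective _ (chord_injective hf)]
    refine card_le_of_not_isInnerChord S _ ?_
    simp only [mem_image, mem_filter]
    rintro _ ⟨e, ⟨he, h⟩, rfl⟩
    refine ⟨isChord_chord hf ?_ fun v => mem_image_of_mem f (mem_univ v), h⟩
    exact SimpleGraph.not_isDiag_of_mem_edgeSet _ (SimpleGraph.mem_edgeFinset.1 he)
  rw [← SimpleGraph.card_edgeFinset_top_eq_card_choose_two,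
    ← card_filter_add_card_filter_not (fun e => IsInnerChord S (chord f e)), ← hS, mul_comm k]
  exact add_le_add hinner hside

theorem card_le_two_mul_of_hasBookEmbedding_top [Fintype V] (hV : 4 ≤ Fintype.card V)
    {k : ℕ} (h : HasBookEmbedding (⊤ : SimpleGraph V) k) : Fintype.card V ≤ 2 * k := by
  obtain ⟨f, hf, pg, hpg⟩ := h
  exact le_two_mul_of_choose_two_le hV (choose_two_le_of_validAssign hf hpg)

end Chord

lemma mod_div_two_ne {n s t : ℕ} (h₁ : s + 2 ≤ t) (h₂ : t + 2 ≤ s + n) :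
    t % n / 2 ≠ s % n / 2 := by
  obtain ⟨d, rfl⟩ := Nat.exists_eq_add_of_le h₁
  have hs := Nat.mod_lt s (show 0 < n by omega)
  rw [add_assoc, Nat.add_mod, Nat.mod_eq_of_lt (show 2 + d < n by omega)]
  rcases lt_or_ge (s % n + (2 + d)) n with h | h
  · rw [Nat.mod_eq_of_lt h]
    omega
  · rw [Nat.mod_eq_sub_mod h, Nat.mod_eq_of_lt (by omega)]
    omega

theorem hasBookEmbedding_top_fin {n : ℕ} (hn : 0 < n) :
    HasBookEmbedding (⊤ : SimpleGraph (Fin n)) ((n + 1) / 2) := by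
  refine ⟨Fin.val, Fin.val_injective,
    fun e => ⟨((chord Fin.val e).1 + (chord Fin.val e).2) % n / 2, ?_⟩, ?_⟩
  · have := Nat.mod_lt ((chord Fin.val e).1 + (chord Fin.val e).2) hn
    omega
  · intro a b c d _ _ hab hcd hpage
    simp only [chord_mk_of_lt hab, chord_mk_of_lt hcd, Fin.mk.injEq] at hpage
    have := b.isLt
    have := d.isLt
    rintro (⟨h₁, h₂, h₃⟩ | ⟨h₁, h₂, h₃⟩)
    · exact mod_div_two_ne (by omega) (by omega) hpage.symm
    · exact mod_div_two_ne (by omega) (by omega) hpage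

end BookEmbedding

/-- The book thickness of the complete graph `K_n` equals `⌈n / 2⌉` for `n ≥ 4`. -/
theorem stmt_7 (n : ℕ) (hn : 4 ≤ n) :
    bookThickness (⊤ : SimpleGraph (Fin n)) = (n + 1) / 2 := by
  have hupper := BookEmbedding.hasBookEmbedding_top_fin (n := n) (by omega)
  refine le_antisymm (Nat.sInf_le hupper) (le_csInf ⟨_, hupper⟩ fun k hk => ?_)
  have := BookEmbedding.card_le_two_mul_of_hasBookEmbedding_top (by simpa using hn) hk
  rw [Fintype.card_fin] at this
  omega
end

section
/- For every r ≥ 1, any family of r^3 pairwise disjoint edges in a graph with a fixed vertex ordering contains r edges that form an r-rainbow, an r-twist, or an r-necklace. -/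
/-!
Order the edges by two strict partial orders: `i` nests `j` when edge `j` lies inside edge `i`,
and `i` precedes `j` when edge `i` ends before edge `j` starts. Chains of the first order are
rainbows, chains of the second are necklaces. If neither has a chain of length `r`, every edge
gets a pair of chain heights in `[1, r - 1]²`, so by pigeonhole some `r` edges share both heights.
Two such edges are comparable in neither order, i.e. they cross, and `r` pairwise crossing edges
sorted by left endpoint form a twist.
-/

open Finset Function

namespace Relation

variable {α : Type*} [Fintype α] {R : α → α → Prop}

open Classical in
noncomputable def chainHeight (R : α → α → Prop) (a : α) : ℕ :=
  ({S | IsChain R (S : Set α) ∧ ∀ b ∈ S, b = a ∨ R b a} : Finset (Finset α)).sup card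

lemma card_le_chainHeight {a : α} {S : Finset α} (hS : IsChain R (S : Set α))
    (htop : ∀ b ∈ S, b = a ∨ R b a) : S.card ≤ chainHeight R a := by
  classical
  exact le_sup (f := card) (mem_filter.mpr ⟨mem_univ S, hS, htop⟩)

lemma one_le_chainHeight (a : α) : 1 ≤ chainHeight R a := by
  simpa using card_le_chainHeight (R := R) (S := {a}) (by simp) (by simp)

lemma exists_isChain_card_eq_chainHeight (a : α) : ∃ S : Finset α, IsChain R (S : Set α) ∧
    (∀ b ∈ S, b = a ∨ R b a) ∧ S.card = chainHeight R a := by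
  classical
  obtain ⟨S, hS, hmax⟩ := exists_mem_eq_sup
    ({S | IsChain R (S : Set α) ∧ ∀ b ∈ S, b = a ∨ R b a} : Finset (Finset α))
    ⟨∅, by simp⟩ card
  exact ⟨S, (mem_filter.mp hS).2.1, (mem_filter.mp hS).2.2, hmax.symm⟩

lemma chainHeight_lt_chainHeight (hR : IsStrictOrder α R) {a b : α}
    (hab : R a b) : chainHeight R a < chainHeight R b := by
  classical
  obtain ⟨S, hS, htop, hcard⟩ := exists_isChain_card_eq_chainHeight (R := R) a
  have hbelow : ∀ c ∈ S, R c b := by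
    intro c hc
    rcases htop c hc with rfl | hca
    exacts [hab, hR.trans c a b hca hab]
  have hbS : b ∉ S := fun hb => hR.irrefl b (hbelow b hb)
  have hchain : IsChain R ((insert b S : Finset α) : Set α) := by
    rw [coe_insert]
    exact hS.insert fun c hc _ => Or.inr (hbelow c hc)
  have := card_le_chainHeight (a := b) hchain (by simpa using fun c hc => Or.inr (hbelow c hc))
  rw [card_insert_of_notMem hbS] at this
  omega

lemma exists_isChain_card_eq {a : α} {n : ℕ} (h : n ≤ chainHeight R a) :
    ∃ S : Finset α, IsChain R (S : Set α) ∧ S.card = n := by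
  obtain ⟨S, hS, -, hcard⟩ := exists_isChain_card_eq_chainHeight (R := R) a
  obtain ⟨T, hTS, hT⟩ := exists_subset_card_eq (hcard ▸ h)
  exact ⟨T, hS.mono (coe_subset.mpr hTS), hT⟩

end Relation

lemma exists_strictMono_comp_of_card_eq {ι V : Type*} [LinearOrder V] {s : ι → V}
    (hs : Injective s) {S : Finset ι} {r : ℕ} (hcard : S.card = r) :
    ∃ σ : Fin r → ι, (∀ a, σ a ∈ S) ∧ StrictMono (s ∘ σ) := by
  classical
  have himage : (S.image s).card = r := by rw [card_image_of_injective S hs, hcard]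
  choose σ hσS hσ using fun a => mem_image.mp ((S.image s).orderEmbOfFin_mem himage a)
  refine ⟨σ, hσS, fun a b hab => ?_⟩
  simpa only [comp_apply, hσ] using (S.image s).orderEmbOfFin himage |>.strictMono hab

lemma IsChain.rel_of_strictMono_comp {ι β V : Type*} [Preorder β] [LinearOrder V]
    {s : ι → V} {R : ι → ι → Prop} {S : Set ι} (hS : IsChain R S)
    (hR : ∀ i j, R i j → s i < s j) {σ : β → ι} (hσS : ∀ a, σ a ∈ S)
    (hσ : StrictMono (s ∘ σ)) {a b : β} (hab : a < b) : R (σ a) (σ b) := by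
  have hlt : s (σ a) < s (σ b) := hσ hab
  refine (hS (hσS a) (hσS b) fun h => hlt.ne (congrArg s h)).resolve_right fun hba => ?_
  exact (hR _ _ hba).not_gt hlt

namespace OrderedEdges

variable {ι V : Type*} [LinearOrder V] (s t : ι → V)

def Nests (i j : ι) : Prop := s i < s j ∧ t j < t i

def Precedes (i j : ι) : Prop := t i < s j

variable {s t}

lemma isStrictOrder_nests : IsStrictOrder ι (Nests s t) where
  irrefl _ h := h.1.false
  trans _ _ _ hij hjk := ⟨hij.1.trans hjk.1, hjk.2.trans hij.2⟩

lemma isStrictOrder_precedes (hst : ∀ i, s i < t i) : IsStrictOrder ι (Precedes s t) where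
  irrefl i h := (h.trans (hst i)).false
  trans _ j _ hij hjk := hij.trans ((hst j).trans hjk)

variable [Fintype ι]

open Relation

lemma crosses_of_chainHeight_eq (hst : ∀ i, s i < t i) (ht : Injective t)
    (hts : ∀ i j, t i ≠ s j) {i j : ι} (hij : s i < s j)
    (hN : chainHeight (Nests s t) i = chainHeight (Nests s t) j)
    (hP : chainHeight (Precedes s t) i = chainHeight (Precedes s t) j) :
    t i < t j ∧ s j < t i := by
  have hne : i ≠ j := fun h => hij.ne (congrArg s h)
  constructor
  · by_contra! hji
    have hnests : Nests s t i j := ⟨hij, hji.lt_of_ne (ht.ne hne).symm⟩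
    exact (chainHeight_lt_chainHeight isStrictOrder_nests hnests).ne hN
  · by_contra! hij'
    have hprec : Precedes s t i j := hij'.lt_of_ne (hts i j)
    exact (chainHeight_lt_chainHeight (isStrictOrder_precedes hst) hprec).ne hP

lemma exists_crossing_of_chainHeight_lt (hst : ∀ i, s i < t i) (ht : Injective t)
    (hts : ∀ i j, t i ≠ s j) {r : ℕ} (hcard : (r - 1) ^ 3 < Fintype.card ι)
    (hN : ∀ i, chainHeight (Nests s t) i < r) (hP : ∀ i, chainHeight (Precedes s t) i < r) :
    ∃ C : Finset ι, C.card = r ∧ ∀ i ∈ C, ∀ j ∈ C, s i < s j → t i < t j ∧ s j < t i := by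
  classical
  let height i := (chainHeight (Nests s t) i, chainHeight (Precedes s t) i)
  have hmaps : ∀ i ∈ (univ : Finset ι), height i ∈ Ioo 0 r ×ˢ Ioo 0 r := fun i _ =>
    mem_product.mpr ⟨mem_Ioo.mpr ⟨one_le_chainHeight i, hN i⟩,
      mem_Ioo.mpr ⟨one_le_chainHeight i, hP i⟩⟩
  have hbox : (Ioo 0 r ×ˢ Ioo 0 r).card * (r - 1) < (univ : Finset ι).card := by
    simpa [card_product, pow_succ] using hcard
  obtain ⟨y, -, hy⟩ := exists_lt_card_fiber_of_mul_lt_card_of_maps_to hmaps hbox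
  obtain ⟨C, hCy, hC⟩ := exists_subset_card_eq (show r ≤ #{i ∈ univ | height i = y} by omega)
  have hconst : ∀ i ∈ C, height i = y := fun i hi => (mem_filter.mp (hCy hi)).2
  refine ⟨C, hC, fun i hi j hj hij => ?_⟩
  have hij_eq := (hconst i hi).trans (hconst j hj).symm
  exact crosses_of_chainHeight_eq hst ht hts hij (congrArg Prod.fst hij_eq)
    (congrArg Prod.snd hij_eq)

end OrderedEdges

open OrderedEdges Relation in
theorem stmt_15_general {V : Type*} [LinearOrder V] (r : ℕ)
    (hr : 1 ≤ r) (s t : Fin (r ^ 3) → V)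
    (hst : ∀ i, s i < t i)
    (hdisj : ∀ i j, i ≠ j → s i ≠ s j ∧ s i ≠ t j ∧ t i ≠ s j ∧ t i ≠ t j) :
    ∃ σ : Fin r → Fin (r ^ 3), Function.Injective σ ∧
      ((StrictMono (fun i => s (σ i)) ∧ StrictAnti (fun i => t (σ i))) ∨
       (StrictMono (fun i => s (σ i)) ∧ StrictMono (fun i => t (σ i)) ∧
         ∀ i j : Fin r, s (σ i) < t (σ j)) ∨
       (∀ i j : Fin r, i < j → t (σ i) < s (σ j))) := by
  have hs : Injective s := fun i j h => by_contra fun hne => (hdisj i j hne).1 h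
  have ht : Injective t := fun i j h => by_contra fun hne => (hdisj i j hne).2.2.2 h
  have hts : ∀ i j, t i ≠ s j := fun i j => by
    rcases eq_or_ne i j with rfl | hne
    exacts [(hst i).ne', (hdisj i j hne).2.2.1]
  by_cases hN : ∃ i, r ≤ chainHeight (Nests s t) i
  · obtain ⟨S, hS, hcard⟩ := exists_isChain_card_eq hN.choose_spec
    obtain ⟨σ, hσS, hσ⟩ := exists_strictMono_comp_of_card_eq hs hcard
    exact ⟨σ, hσ.injective.of_comp, .inl ⟨hσ, fun a b hab =>
      (hS.rel_of_strictMono_comp (fun _ _ h => h.1) hσS hσ hab).2⟩⟩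
  by_cases hP : ∃ i, r ≤ chainHeight (Precedes s t) i
  · obtain ⟨S, hS, hcard⟩ := exists_isChain_card_eq hP.choose_spec
    obtain ⟨σ, hσS, hσ⟩ := exists_strictMono_comp_of_card_eq hs hcard
    exact ⟨σ, hσ.injective.of_comp, .inr (.inr fun a b hab =>
      hS.rel_of_strictMono_comp (fun i _ h => (hst i).trans h) hσS hσ hab)⟩
  push Not at hN hP
  have hcard : (r - 1) ^ 3 < Fintype.card (Fin (r ^ 3)) := by
    simpa using Nat.pow_lt_pow_left (Nat.sub_lt hr one_pos) three_ne_zero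
  obtain ⟨C, hC, hcross⟩ := exists_crossing_of_chainHeight_lt hst ht hts hcard hN hP
  obtain ⟨σ, hσC, hσ⟩ := exists_strictMono_comp_of_card_eq hs hC
  have hcrossσ {a b : Fin r} (hab : a < b) := hcross _ (hσC a) _ (hσC b) (hσ hab)
  refine ⟨σ, hσ.injective.of_comp, .inr (.inl ⟨hσ, fun a b hab => (hcrossσ hab).1, ?_⟩)⟩
  intro a b
  rcases lt_trichotomy a b with hab | rfl | hba
  exacts [(hσ hab).trans (hst _), hst _, (hcrossσ hba).2]

/-- For every `r ≥ 1`, any family of `r ^ 3` pairwise disjoint edges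
`(s i, t i)` (with `s i ≺ t i`) of a graph `G` with a fixed vertex ordering
contains `r` edges forming an `r`-rainbow
(`s_1 ≺ ⋯ ≺ s_r ≺ t_r ≺ ⋯ ≺ t_1`), an `r`-twist
(`s_1 ≺ ⋯ ≺ s_r ≺ t_1 ≺ ⋯ ≺ t_r`), or an `r`-necklace
(`s_1 ≺ t_1 ≺ ⋯ ≺ s_r ≺ t_r`). -/
theorem stmt_15 {V : Type*} [LinearOrder V] (G : SimpleGraph V) (r : ℕ)
    (hr : 1 ≤ r) (s t : Fin (r ^ 3) → V)
    (hadj : ∀ i, G.Adj (s i) (t i)) (hst : ∀ i, s i < t i)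
    (hdisj : ∀ i j, i ≠ j → s i ≠ s j ∧ s i ≠ t j ∧ t i ≠ s j ∧ t i ≠ t j) :
    ∃ σ : Fin r → Fin (r ^ 3), Function.Injective σ ∧
      ((StrictMono (fun i => s (σ i)) ∧ StrictAnti (fun i => t (σ i))) ∨
       (StrictMono (fun i => s (σ i)) ∧ StrictMono (fun i => t (σ i)) ∧
         ∀ i j : Fin r, s (σ i) < t (σ j)) ∨
       (∀ i j : Fin r, i < j → t (σ i) < s (σ j))) :=
  stmt_15_general r hr s t hst hdisj
end
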